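/- arXiv:2408.02700 — 6 statements merged into one kernel-verified Lean document; each statement's English description precedes it below -/
import Mathlib

section
/- Let ξ be the trapezoidal fuzzy variable (r1,r2,r3,r4) with r1 < r2 ≤ r3 < r4 and let λ ∈ [0,1]. Then E_λ(ξ) = (1 − λ)·(r1 + r2)/2 + λ·(r3 + r4)/2. -/
/-! The curve `r ↦ m_λ([r,∞))` of the trapezoid is `λ` times the ramp falling from `1` at `r3` to
`0` at `r4`, plus `1 − λ` times the ramp falling from `r1` to `r2`: `Pos([r,∞))` follows the right
edge of the trapezoid, and `Nec([r,∞)) = 1 − Pos((−∞,r))` the left one. On curves that equal `1`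
left of `a` and `0` right of `b`, the expected-value functional reduces to `a + ∫_a^b`, so it is
affine there, and the ramp from `a` to `b` has expected value `(a + b) / 2`. -/

open MeasureTheory Set

/-- Possibility measure of an event `A` built from membership function `μ`
(with the convention `sSup ∅ = 0`, which holds for `Real.sSup`). -/
noncomputable def Pos (μ : ℝ → ℝ) (A : Set ℝ) : ℝ := sSup (μ '' A)

/-- Necessity measure associated with `μ`. -/
noncomputable def Nec (μ : ℝ → ℝ) (A : Set ℝ) : ℝ := 1 - Pos μ Aᶜ

/-- The parametric measure `m_λ(A) = λ·Pos(A) + (1−λ)·Nec(A)`. -/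
noncomputable def mMeas (l : ℝ) (μ : ℝ → ℝ) (A : Set ℝ) : ℝ :=
  l * Pos μ A + (1 - l) * Nec μ A

/-- The `m_λ`-expected value of the fuzzy variable with membership function `μ`:
`E_λ(ξ) = ∫_{−∞}^0 (m_λ([r,∞)) − 1) dr + ∫_0^∞ m_λ([r,∞)) dr`. -/
noncomputable def Eexp (l : ℝ) (μ : ℝ → ℝ) : ℝ :=
  (∫ r in Set.Iic (0:ℝ), (mMeas l μ (Set.Ici r) - 1)) +
  (∫ r in Set.Ioi (0:ℝ), mMeas l μ (Set.Ici r))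

/-- Membership function of the trapezoidal fuzzy variable `(r1,r2,r3,r4)`. -/
noncomputable def trapMF (r1 r2 r3 r4 : ℝ) : ℝ → ℝ := fun x =>
  if r1 ≤ x ∧ x ≤ r2 then (x - r1) / (r2 - r1)
  else if r2 ≤ x ∧ x ≤ r3 then 1
  else if r3 ≤ x ∧ x ≤ r4 then (r4 - x) / (r4 - r3)
  else 0

/-- Membership function of the triangular fuzzy variable `(r1,r2,r4)`. -/
noncomputable def triMF (r1 r2 r4 : ℝ) : ℝ → ℝ := fun x =>
  if r1 ≤ x ∧ x ≤ r2 then (x - r1) / (r2 - r1)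
  else if r2 ≤ x ∧ x ≤ r4 then (r4 - x) / (r4 - r2)
  else 0

/-- Membership function of the trapezoidal fuzzy variable `(a−α, a, b, b+β)`. -/
noncomputable def trapMF2 (a b α β : ℝ) : ℝ → ℝ := fun x =>
  if a - α ≤ x ∧ x ≤ a then 1 - (a - x) / α
  else if a ≤ x ∧ x ≤ b then 1
  else if b ≤ x ∧ x ≤ b + β then 1 - (x - b) / β
  else 0

/-- Membership function of the triangular fuzzy variable `(a−α, a, a+β)`. -/
noncomputable def triMF2 (a α β : ℝ) : ℝ → ℝ := fun x =>
  if a - α ≤ x ∧ x ≤ a then 1 - (a - x) / α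
  else if a ≤ x ∧ x ≤ a + β then 1 - (x - a) / β
  else 0

noncomputable def ramp (a b : ℝ) (x : ℝ) : ℝ := max 0 (min 1 ((b - x) / (b - a)))

section Ramp

variable {a b : ℝ}

lemma ramp_of_le (hab : a < b) {x : ℝ} (hx : x ≤ a) : ramp a b x = 1 := by
  have : 1 ≤ (b - x) / (b - a) := by rw [one_le_div (by linarith)]; linarith
  simp [ramp, min_eq_left this]

lemma ramp_of_ge (hab : a < b) {x : ℝ} (hx : b ≤ x) : ramp a b x = 0 := by
  have : (b - x) / (b - a) ≤ 0 := div_nonpos_of_nonpos_of_nonneg (by linarith) (by linarith)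
  simp [ramp, min_eq_right (this.trans zero_le_one), this]

lemma ramp_of_mem_Icc (hab : a < b) {x : ℝ} (hx : x ∈ Icc a b) :
    ramp a b x = (b - x) / (b - a) := by
  have h0 : 0 ≤ (b - x) / (b - a) := div_nonneg (by linarith [hx.2]) (by linarith)
  have h1 : (b - x) / (b - a) ≤ 1 := by rw [div_le_one (by linarith)]; linarith [hx.1]
  simp [ramp, min_eq_right h1, max_eq_right h0]

lemma ramp_nonneg (x : ℝ) : 0 ≤ ramp a b x := le_max_left _ _

lemma ramp_le_one (x : ℝ) : ramp a b x ≤ 1 := max_le zero_le_one (min_le_left _ _)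

lemma antitone_ramp (hab : a < b) : Antitone (ramp a b) := fun x y hxy =>
  max_le_max le_rfl <| min_le_min le_rfl <| div_le_div_of_nonneg_right (by linarith) (by linarith)

lemma continuous_ramp : Continuous (ramp a b) := by
  unfold ramp; fun_prop

lemma integral_ramp (hab : a < b) : ∫ x in a..b, ramp a b x = (b - a) / 2 := by
  rw [intervalIntegral.integral_congr (g := fun x => (b - x) / (b - a))
    (fun x hx => ramp_of_mem_Icc hab (by rwa [uIcc_of_le hab.le] at hx)),
    intervalIntegral.integral_div, intervalIntegral.integral_sub intervalIntegrable_const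
      intervalIntegral.intervalIntegrable_id, intervalIntegral.integral_const, integral_id,
    smul_eq_mul]
  field_simp [sub_ne_zero.mpr hab.ne']
  ring

end Ramp

lemma sSup_image_Ici_of_antitoneOn {f : ℝ → ℝ} {r : ℝ} (hf : AntitoneOn f (Ici r)) :
    sSup (f '' Ici r) = f r :=
  (hf.map_isLeast isLeast_Ici).csSup_eq

lemma sSup_image_Iio_of_monotoneOn {f : ℝ → ℝ} {r : ℝ} (hf : MonotoneOn f (Iic r))
    (hc : ContinuousWithinAt f (Iio r) r) : sSup (f '' Iio r) = f r := by
  refine (isLUB_of_mem_closure ?_ (hc.mem_closure_image ?_)).csSup_eq (nonempty_Iio.image f)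
  · rintro _ ⟨x, hx, rfl⟩
    exact hf (mem_Iic.2 hx.le) (mem_Iic.2 le_rfl) hx.le
  · rw [closure_Iio' nonempty_Iio]
    exact mem_Iic.2 le_rfl

theorem MeasureTheory.LocallyIntegrable.intervalIntegrable {E : Type*} [NormedAddCommGroup E]
    {μ : Measure ℝ} [IsLocallyFiniteMeasure μ] {f : ℝ → E} (hf : LocallyIntegrable f μ)
    (u v : ℝ) : IntervalIntegrable f μ u v :=
  (hf.integrableOn_isCompact isCompact_uIcc).intervalIntegrable

noncomputable def tailMean (g : ℝ → ℝ) : ℝ :=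
  (∫ r in Iic (0:ℝ), (g r - 1)) + ∫ r in Ioi (0:ℝ), g r

lemma Eexp_eq_tailMean (l : ℝ) (μ : ℝ → ℝ) :
    Eexp l μ = tailMean fun r => mMeas l μ (Ici r) := rfl

section TailMean

variable {g h : ℝ → ℝ} {a b : ℝ}

lemma tailMean_eq_add_integral (hg : LocallyIntegrable g) (h1 : ∀ x ≤ a, g x = 1)
    (h0 : ∀ x, b ≤ x → g x = 0) : tailMean g = a + ∫ x in a..b, g x := by
  set c := min a 0
  set d := max b 0
  have hca : c ≤ a := min_le_left _ _
  have hc0 : c ≤ 0 := min_le_right _ _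
  have hbd : b ≤ d := le_max_left _ _
  have h0d : 0 ≤ d := le_max_right _ _
  have hII := hg.intervalIntegrable
  have hneg : ∫ r in Iic (0:ℝ), (g r - 1) = (∫ r in c..0, g r) + c := by
    rw [setIntegral_eq_of_subset_of_forall_sdiff_eq_zero measurableSet_Iic Ioc_subset_Iic_self
        fun x hx => ?_, ← intervalIntegral.integral_of_le hc0,
      intervalIntegral.integral_sub (hII c 0) intervalIntegrable_const,
      intervalIntegral.integral_const, smul_eq_mul]
    · ring
    · have hxc : x ≤ c := by
        by_contra! hcx
        exact hx.2 ⟨hcx, hx.1⟩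
      rw [h1 x (hxc.trans hca), sub_self]
  have hpos : ∫ r in Ioi (0:ℝ), g r = ∫ r in 0..d, g r := by
    rw [setIntegral_eq_of_subset_of_forall_sdiff_eq_zero measurableSet_Ioi Ioc_subset_Ioi_self
        fun x hx => h0 x ?_, intervalIntegral.integral_of_le h0d]
    by_contra! hxd
    exact hx.2 ⟨hx.1, (hxd.trans_le hbd).le⟩
  have hflat : ∫ r in c..a, g r = a - c := by
    rw [intervalIntegral.integral_congr (g := fun _ => 1) fun x hx => h1 x ?_]
    · simp
    · rw [uIcc_of_le hca] at hx
      exact hx.2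
  have hvanish : ∫ r in b..d, g r = 0 := by
    rw [intervalIntegral.integral_congr (g := fun _ => 0) fun x hx => h0 x ?_]
    · simp
    · rw [uIcc_of_le hbd] at hx
      exact hx.1
  rw [tailMean, hneg, hpos, add_right_comm,
    intervalIntegral.integral_add_adjacent_intervals (hII c 0) (hII 0 d),
    ← intervalIntegral.integral_add_adjacent_intervals (hII c a) (hII a d),
    ← intervalIntegral.integral_add_adjacent_intervals (hII a b) (hII b d), hflat, hvanish]
  ring

lemma tailMean_ramp (hab : a < b) : tailMean (ramp a b) = (a + b) / 2 := by
  rw [tailMean_eq_add_integral continuous_ramp.locallyIntegrable (fun x => ramp_of_le hab)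
    (fun x => ramp_of_ge hab), integral_ramp hab]
  ring

lemma tailMean_affineCombination (hg : LocallyIntegrable g) (hg1 : ∀ x ≤ a, g x = 1)
    (hg0 : ∀ x, b ≤ x → g x = 0) (hh : LocallyIntegrable h) (hh1 : ∀ x ≤ a, h x = 1)
    (hh0 : ∀ x, b ≤ x → h x = 0) (c : ℝ) :
    tailMean (fun x => c * g x + (1 - c) * h x) = c * tailMean g + (1 - c) * tailMean h := by
  have hgh : LocallyIntegrable fun x => c * g x + (1 - c) * h x :=
    (hg.smul c).add (hh.smul (1 - c))
  rw [tailMean_eq_add_integral hgh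
      (fun x hx => by simp [hg1 x hx, hh1 x hx]) (fun x hx => by simp [hg0 x hx, hh0 x hx]),
    tailMean_eq_add_integral hg hg1 hg0, tailMean_eq_add_integral hh hh1 hh0,
    intervalIntegral.integral_add ((hg.intervalIntegrable a b).const_mul c)
      ((hh.intervalIntegrable a b).const_mul (1 - c)),
    intervalIntegral.integral_const_mul, intervalIntegral.integral_const_mul]
  ring

end TailMean

section Trapezoid

variable {r1 r2 r3 r4 : ℝ}

lemma trapMF_eq_min (h12 : r1 < r2) (h23 : r2 ≤ r3) (h34 : r3 < r4) (x : ℝ) :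
    trapMF r1 r2 r3 r4 x = min (1 - ramp r1 r2 x) (ramp r3 r4 x) := by
  unfold trapMF
  split_ifs with hrise hflat hfall
  · rw [ramp_of_le h34 (hrise.2.trans h23),
      min_eq_left (by linarith [ramp_nonneg (a := r1) (b := r2) x]), ramp_of_mem_Icc h12 hrise]
    field_simp [sub_ne_zero.mpr h12.ne']
    ring
  · rw [ramp_of_ge h12 hflat.1, ramp_of_le h34 hflat.2]
    simp
  · rw [ramp_of_ge h12 (h23.trans hfall.1), sub_zero, min_eq_right (ramp_le_one x),
      ramp_of_mem_Icc h34 hfall]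
  · rcases lt_or_ge x r1 with hx | hx
    · rw [ramp_of_le h12 hx.le, ramp_of_le h34 (by linarith)]
      simp
    · have hx4 : r4 < x := by
        by_contra! h
        rcases le_total x r2 with h2 | h2
        · exact hrise ⟨hx, h2⟩
        rcases le_total x r3 with h3 | h3
        · exact hflat ⟨h2, h3⟩
        · exact hfall ⟨h3, h⟩
      rw [ramp_of_ge h12 (by linarith), ramp_of_ge h34 hx4.le]
      simp

lemma continuous_trapMF (h12 : r1 < r2) (h23 : r2 ≤ r3) (h34 : r3 < r4) :
    Continuous (trapMF r1 r2 r3 r4) := by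
  rw [funext (trapMF_eq_min h12 h23 h34)]
  exact (continuous_const.sub continuous_ramp).min continuous_ramp

lemma trapMF_of_le (h12 : r1 < r2) (h23 : r2 ≤ r3) (h34 : r3 < r4) {x : ℝ} (hx : x ≤ r2) :
    trapMF r1 r2 r3 r4 x = 1 - ramp r1 r2 x := by
  rw [trapMF_eq_min h12 h23 h34, ramp_of_le h34 (hx.trans h23)]
  exact min_eq_left (by linarith [ramp_nonneg (a := r1) (b := r2) x])

lemma trapMF_of_ge (h12 : r1 < r2) (h23 : r2 ≤ r3) (h34 : r3 < r4) {x : ℝ} (hx : r3 ≤ x) :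
    trapMF r1 r2 r3 r4 x = ramp r3 r4 x := by
  rw [trapMF_eq_min h12 h23 h34, ramp_of_ge h12 (h23.trans hx), sub_zero]
  exact min_eq_right (ramp_le_one x)

lemma trapMF_le_one (h12 : r1 < r2) (h23 : r2 ≤ r3) (h34 : r3 < r4) (x : ℝ) :
    trapMF r1 r2 r3 r4 x ≤ 1 := by
  rw [trapMF_eq_min h12 h23 h34]
  exact (min_le_right _ _).trans (ramp_le_one x)

lemma Pos_trapMF_Ici (h12 : r1 < r2) (h23 : r2 ≤ r3) (h34 : r3 < r4) (r : ℝ) :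
    Pos (trapMF r1 r2 r3 r4) (Ici r) = ramp r3 r4 r := by
  rcases le_total r r3 with hr | hr
  · rw [ramp_of_le h34 hr]
    refine IsGreatest.csSup_eq ⟨⟨r3, hr, ?_⟩, ?_⟩
    · rw [trapMF_of_ge h12 h23 h34 le_rfl, ramp_of_le h34 le_rfl]
    · rintro _ ⟨x, -, rfl⟩
      exact trapMF_le_one h12 h23 h34 x
  · rw [Pos, sSup_image_Ici_of_antitoneOn, trapMF_of_ge h12 h23 h34 hr]
    intro x hx y hy hxy
    rw [trapMF_of_ge h12 h23 h34 (hr.trans hx), trapMF_of_ge h12 h23 h34 (hr.trans hy)]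
    exact antitone_ramp h34 hxy

lemma Pos_trapMF_Iio (h12 : r1 < r2) (h23 : r2 ≤ r3) (h34 : r3 < r4) (r : ℝ) :
    Pos (trapMF r1 r2 r3 r4) (Iio r) = 1 - ramp r1 r2 r := by
  rcases le_or_gt r r2 with hr | hr
  · rw [Pos, sSup_image_Iio_of_monotoneOn ?_ (continuous_trapMF h12 h23 h34).continuousWithinAt,
      trapMF_of_le h12 h23 h34 hr]
    intro x hx y hy hxy
    rw [trapMF_of_le h12 h23 h34 (le_trans hx hr), trapMF_of_le h12 h23 h34 (le_trans hy hr)]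
    exact sub_le_sub_left (antitone_ramp h12 hxy) 1
  · rw [ramp_of_ge h12 hr.le, sub_zero]
    refine IsGreatest.csSup_eq ⟨⟨r2, hr, ?_⟩, ?_⟩
    · rw [trapMF_of_le h12 h23 h34 le_rfl, ramp_of_ge h12 le_rfl, sub_zero]
    · rintro _ ⟨x, -, rfl⟩
      exact trapMF_le_one h12 h23 h34 x

lemma mMeas_trapMF_Ici (h12 : r1 < r2) (h23 : r2 ≤ r3) (h34 : r3 < r4) (l r : ℝ) :
    mMeas l (trapMF r1 r2 r3 r4) (Ici r) = l * ramp r3 r4 r + (1 - l) * ramp r1 r2 r := by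
  rw [mMeas, Nec, compl_Ici, Pos_trapMF_Ici h12 h23 h34, Pos_trapMF_Iio h12 h23 h34, sub_sub_cancel]

end Trapezoid

theorem stmt_3_general (r1 r2 r3 r4 l : ℝ)
    (h12 : r1 < r2) (h23 : r2 ≤ r3) (h34 : r3 < r4) :
    Eexp l (trapMF r1 r2 r3 r4) = (1 - l) * (r1 + r2) / 2 + l * (r3 + r4) / 2 := by
  have hfall : ∀ x ≤ r1, ramp r3 r4 x = 1 := fun x hx => ramp_of_le h34 (by linarith)
  have hrise : ∀ x, r4 ≤ x → ramp r1 r2 x = 0 := fun x hx => ramp_of_ge h12 (by linarith)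
  rw [Eexp_eq_tailMean]
  simp_rw [mMeas_trapMF_Ici h12 h23 h34]
  rw [tailMean_affineCombination continuous_ramp.locallyIntegrable hfall
      (fun x => ramp_of_ge h34) continuous_ramp.locallyIntegrable (fun x => ramp_of_le h12) hrise,
    tailMean_ramp h12, tailMean_ramp h34]
  ring

theorem stmt_3 (r1 r2 r3 r4 l : ℝ)
    (h12 : r1 < r2) (h23 : r2 ≤ r3) (h34 : r3 < r4)
    (hl : l ∈ Set.Icc (0:ℝ) 1) :
    Eexp l (trapMF r1 r2 r3 r4) = (1 - l) * (r1 + r2) / 2 + l * (r3 + r4) / 2 :=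
  stmt_3_general r1 r2 r3 r4 l h12 h23 h34
end

section
/- Let n ≥ 1, λ ∈ [0,1], and for each i = 1, …, n let d_i ≥ 0, c_i ∈ ℝ, h_i > 0, and let D_i be the triangular fuzzy variable (a_i − α_i, a_i, a_i + β_i) with α_i > 0, β_i > 0, and 0 < a_i − α_i. Set e_i = ∫_0^∞ m_λ(D_i ≤ 1/r) dr and f(x) = Σ_{i=1}^n (d_i·x_i − c_i − (h_i·x_i²/2)·e_i). Then f(y) ≤ f(x*) for every y ∈ ℝⁿ with y_i ≥ 0, where x_i* = d_i / ( h_i·[ (λ/α_i)·ln(a_i/(a_i − α_i)) + ((1 − λ)/β_i)·ln((a_i + β_i)/a_i) ] ). -/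
open MeasureTheory Set

section Aux

variable {a α β : ℝ}

lemma triMF2_le_one (hα : 0 < α) (hβ : 0 < β) (x : ℝ) : triMF2 a α β x ≤ 1 := by
  unfold triMF2; split_ifs with h1 h2
  · have : 0 ≤ (a - x)/α := div_nonneg (by linarith [h1.2]) hα.le
    linarith
  · have : 0 ≤ (x - a)/β := div_nonneg (by linarith [h2.1]) hβ.le
    linarith
  · norm_num

lemma posIic_lo (hα : 0 < α) (hβ : 0 < β) {t : ℝ} (ht : t < a - α) :
    Pos (triMF2 a α β) (Iic t) = 0 := by
  have himg : triMF2 a α β '' Iic t = {0} := by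
    ext y
    simp only [mem_image, mem_Iic, mem_singleton_iff]
    constructor
    · rintro ⟨x, hx, rfl⟩
      unfold triMF2; split_ifs with h1 h2
      · linarith [h1.1]
      · linarith [h2.1]
      · rfl
    · rintro rfl
      refine ⟨t, le_refl t, ?_⟩
      unfold triMF2; split_ifs with h1 h2
      · linarith [h1.1]
      · linarith [h2.1]
      · rfl
  rw [Pos, himg, csSup_singleton]

lemma posIic_mid (hα : 0 < α) (hβ : 0 < β) {t : ℝ} (h1 : a - α ≤ t) (h2 : t ≤ a) :
    Pos (triMF2 a α β) (Iic t) = 1 - (a - t)/α := by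
  apply IsGreatest.csSup_eq
  constructor
  · exact ⟨t, le_refl t, by unfold triMF2; rw [if_pos ⟨h1, h2⟩]⟩
  · rintro y ⟨x, hx, rfl⟩
    simp only [mem_Iic] at hx
    unfold triMF2; split_ifs with hb1 hb2
    · have h3 : (a - t)/α ≤ (a - x)/α := (div_le_div_iff_of_pos_right hα).mpr (by linarith)
      linarith
    · have hxa : x = a := le_antisymm (hx.trans h2) hb2.1
      have hta : t = a := le_antisymm h2 (hxa ▸ hx)
      rw [hxa, hta]; simp
    · have h3 : (a - t)/α ≤ 1 := (div_le_one hα).mpr (by linarith)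
      linarith

lemma posIic_hi (hα : 0 < α) (hβ : 0 < β) {t : ℝ} (h : a ≤ t) :
    Pos (triMF2 a α β) (Iic t) = 1 := by
  apply IsGreatest.csSup_eq
  constructor
  · refine ⟨a, h, ?_⟩
    unfold triMF2; rw [if_pos ⟨by linarith, le_refl a⟩]; simp
  · rintro y ⟨x, _, rfl⟩
    exact triMF2_le_one hα hβ x

lemma posIoi_lt (hα : 0 < α) (hβ : 0 < β) {t : ℝ} (h : t < a) :
    Pos (triMF2 a α β) (Ioi t) = 1 := by
  apply IsGreatest.csSup_eq
  constructor
  · refine ⟨a, h, ?_⟩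
    unfold triMF2; rw [if_pos ⟨by linarith, le_refl a⟩]; simp
  · rintro y ⟨x, _, rfl⟩
    exact triMF2_le_one hα hβ x

lemma posIoi_mid (hα : 0 < α) (hβ : 0 < β) {t : ℝ} (h1 : a ≤ t) (h2 : t < a + β) :
    Pos (triMF2 a α β) (Ioi t) = 1 - (t - a)/β := by
  apply IsLUB.csSup_eq
  · constructor
    · rintro y ⟨x, hx, rfl⟩
      simp only [mem_Ioi] at hx
      unfold triMF2; split_ifs with hb1 hb2
      · linarith [hb1.2]
      · have h3 : (t - a)/β ≤ (x - a)/β := (div_le_div_iff_of_pos_right hβ).mpr (by linarith)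
        linarith
      · have h3 : (t - a)/β ≤ 1 := (div_le_one hβ).mpr (by linarith)
        linarith
    · intro w hw
      by_contra hlt
      push_neg at hlt
      have h0 : 0 < 1 - (t - a)/β - w := by linarith
      set ε := 1 - (t - a)/β - w with hε
      have hεβ : 0 < β * ε / 2 := by positivity
      set x := t + min (β * ε / 2) ((a + β - t)/2) with hxdef
      have hmin1 : min (β * ε / 2) ((a + β - t)/2) ≤ β * ε / 2 := min_le_left _ _
      have hmin2 : min (β * ε / 2) ((a + β - t)/2) ≤ (a + β - t)/2 := min_le_right _ _
      have hminpos : 0 < min (β * ε / 2) ((a + β - t)/2) := lt_min hεβ (by linarith)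
      have hx1 : t < x := by simp only [hxdef]; linarith
      have hx2 : x ≤ a + β := by simp only [hxdef]; linarith
      have hxa : a ≤ x := le_trans h1 hx1.le
      have hval : triMF2 a α β x = 1 - (x - a)/β := by
        unfold triMF2
        rw [if_neg, if_pos ⟨hxa, hx2⟩]
        rintro ⟨-, hc2⟩; linarith
      have hmem : triMF2 a α β x ∈ triMF2 a α β '' Ioi t := ⟨x, hx1, rfl⟩
      have hle := hw hmem
      rw [hval] at hle
      have hxt : x - t ≤ β * ε / 2 := by simp only [hxdef]; linarith
      have h4 : (x - t)/β ≤ ε / 2 := by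
        rw [div_le_iff₀ hβ]
        have : ε / 2 * β = β * ε / 2 := by ring
        linarith
      have h5 : (x - a)/β = (x - t)/β + (t - a)/β := by ring
      linarith
  · exact ⟨triMF2 a α β (t + 1), ⟨t + 1, by simp, rfl⟩⟩

lemma posIoi_hi (hα : 0 < α) (hβ : 0 < β) {t : ℝ} (h : a + β ≤ t) :
    Pos (triMF2 a α β) (Ioi t) = 0 := by
  have himg : triMF2 a α β '' Ioi t = {0} := by
    ext y
    simp only [mem_image, mem_Ioi, mem_singleton_iff]
    constructor
    · rintro ⟨x, hx, rfl⟩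
      unfold triMF2; split_ifs with h1 h2
      · linarith [h1.2]
      · linarith [h2.2]
      · rfl
    · rintro rfl
      refine ⟨t + 1, by linarith, ?_⟩
      unfold triMF2; split_ifs with h1 h2
      · linarith [h1.2]
      · linarith [h2.2]
      · rfl
  rw [Pos, himg, csSup_singleton]

/-- The explicit piecewise form of `r ↦ m_λ(D ≤ 1/r)` for `r > 0`. -/
noncomputable def Fpw (l a α β : ℝ) : ℝ → ℝ := fun r =>
  if r ≤ 1/(a+β) then 1
  else if r ≤ 1/a then l + (1-l) * (1/r - a) / β
  else if r ≤ 1/(a-α) then l * (1/r - (a-α)) / α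
  else 0

lemma mMeas_eq_Fpw (l : ℝ) (hα : 0 < α) (hβ : 0 < β) (ha : 0 < a - α) :
    ∀ r ∈ Ioi (0:ℝ), mMeas l (triMF2 a α β) (Set.Iic (1 / r)) = Fpw l a α β r := by
  intro r hr
  simp only [mem_Ioi] at hr
  have ha0 : 0 < a := by linarith
  have hab : 0 < a + β := by linarith
  have haa : 0 < a - α := ha
  unfold mMeas Nec Fpw
  rw [compl_Iic]
  by_cases hc1 : r ≤ 1/(a+β)
  · have h1r : a + β ≤ 1/r := by
      have h := (le_div_iff₀ hab).mp hc1
      rw [le_div_iff₀ hr]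
      nlinarith
    rw [posIic_hi hα hβ (by linarith), posIoi_hi hα hβ h1r, if_pos hc1]
    ring
  · push_neg at hc1
    by_cases hc2 : r ≤ 1/a
    · have h1 : a ≤ 1/r := by
        have h := (le_div_iff₀ ha0).mp hc2
        rw [le_div_iff₀ hr]
        nlinarith
      have h2 : 1/r < a + β := by
        have h := (div_lt_iff₀ hab).mp hc1
        rw [div_lt_iff₀ hr]
        nlinarith
      rw [posIic_hi hα hβ h1, posIoi_mid hα hβ h1 h2, if_neg (not_le.mpr hc1), if_pos hc2]
      ring
    · push_neg at hc2
      by_cases hc3 : r ≤ 1/(a-α)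
      · have h1 : a - α ≤ 1/r := by
          have h := (le_div_iff₀ haa).mp hc3
          rw [le_div_iff₀ hr]
          nlinarith
        have h2 : 1/r < a := by
          have h := (div_lt_iff₀ ha0).mp hc2
          rw [div_lt_iff₀ hr]
          nlinarith
        rw [posIic_mid hα hβ h1 h2.le, posIoi_lt hα hβ h2,
          if_neg (not_le.mpr hc1), if_neg (not_le.mpr hc2), if_pos hc3]
        have key : (1/r - (a - α))/α = 1 - (a - 1/r)/α := by
          have h5 : 1/r - (a - α) = α - (a - 1/r) := by ring
          rw [h5, sub_div, div_self (ne_of_gt hα)]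
        rw [mul_div_assoc, key]
        ring
      · push_neg at hc3
        have h2 : 1/r < a - α := by
          have h := (div_lt_iff₀ haa).mp hc3
          rw [div_lt_iff₀ hr]
          nlinarith
        rw [posIic_lo hα hβ h2, posIoi_lt hα hβ (by linarith),
          if_neg (not_le.mpr hc1), if_neg (not_le.mpr hc2), if_neg (not_le.mpr hc3)]
        ring

lemma int_aff_inv (C k s t : ℝ) (hs : 0 < s) (hst : s ≤ t) :
    ∫ x in s..t, (C + k * (1/x)) = C * (t - s) + k * Real.log (t/s) := by
  have h0 : (0:ℝ) ∉ uIcc s t := by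
    rw [Set.uIcc_of_le hst]
    rintro ⟨h1, -⟩; exact absurd h1 (not_le.mpr hs)
  have hcont : ContinuousOn (fun x : ℝ => k * (1/x)) (uIcc s t) := by
    apply ContinuousOn.mul continuousOn_const
    apply ContinuousOn.div continuousOn_const continuousOn_id
    intro x hx
    rw [uIcc_of_le hst] at hx
    exact ne_of_gt (lt_of_lt_of_le hs hx.1)
  rw [intervalIntegral.integral_add intervalIntegrable_const hcont.intervalIntegrable,
    intervalIntegral.integral_const, intervalIntegral.integral_const_mul,
    integral_one_div h0]
  simp [smul_eq_mul]; ring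

lemma integral_Fpw (l : ℝ) (hα : 0 < α) (hβ : 0 < β) (ha : 0 < a - α) :
    ∫ r in Ioi (0:ℝ), Fpw l a α β r =
      l / α * Real.log (a / (a - α)) + (1 - l) / β * Real.log ((a + β) / a) := by
  have ha0 : 0 < a := by linarith
  have hab : 0 < a + β := by linarith
  set s1 := 1/(a+β) with hs1def
  set s2 := 1/a with hs2def
  set T := 1/(a-α) with hTdef
  have hs1 : 0 < s1 := by positivity
  have hs2 : 0 < s2 := by positivity
  have hT : 0 < T := by positivity
  have h12 : s1 < s2 := one_div_lt_one_div_of_lt ha0 (by linarith)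
  have h2T : s2 < T := one_div_lt_one_div_of_lt ha (by linarith)
  set C2 := l - (1-l) * a / β with hC2
  set C3 := -(l * (a-α) / α) with hC3
  -- equalities of F on intervals
  have hEq1 : EqOn (Fpw l a α β) (fun _ => (1:ℝ)) (uIcc 0 s1) := by
    intro r hr
    rw [uIcc_of_le hs1.le] at hr
    simp only [Fpw]
    rw [if_pos hr.2]
  have hEq2 : EqOn (Fpw l a α β) (fun r => C2 + ((1-l)/β) * (1/r)) (uIcc s1 s2) := by
    intro r hr
    rw [uIcc_of_le h12.le] at hr
    simp only [Fpw, hC2]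
    by_cases h : r ≤ s1
    · have hrs1 : r = s1 := le_antisymm h hr.1
      rw [if_pos h, hrs1, hs1def, one_div_one_div]
      field_simp
      ring
    · rw [if_neg h, if_pos hr.2]
      ring
  have hEq3 : EqOn (Fpw l a α β) (fun r => C3 + (l/α) * (1/r)) (uIcc s2 T) := by
    intro r hr
    rw [uIcc_of_le h2T.le] at hr
    simp only [Fpw, hC3]
    have h1 : ¬ r ≤ s1 := by push_neg; linarith [hr.1]
    by_cases h : r ≤ s2
    · have hrs2 : r = s2 := le_antisymm h hr.1
      rw [if_neg h1, if_pos h, hrs2, hs2def, one_div_one_div]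
      field_simp
      ring
    · rw [if_neg h1, if_neg h, if_pos hr.2]
      ring
  have hcont2 : ContinuousOn (fun r : ℝ => C2 + ((1-l)/β) * (1/r)) (uIcc s1 s2) := by
    apply ContinuousOn.add continuousOn_const
    apply ContinuousOn.mul continuousOn_const
    apply ContinuousOn.div continuousOn_const continuousOn_id
    intro x hx
    rw [uIcc_of_le h12.le] at hx
    exact ne_of_gt (lt_of_lt_of_le hs1 hx.1)
  have hcont3 : ContinuousOn (fun r : ℝ => C3 + (l/α) * (1/r)) (uIcc s2 T) := by
    apply ContinuousOn.add continuousOn_const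
    apply ContinuousOn.mul continuousOn_const
    apply ContinuousOn.div continuousOn_const continuousOn_id
    intro x hx
    rw [uIcc_of_le h2T.le] at hx
    exact ne_of_gt (lt_of_lt_of_le hs2 hx.1)
  have hint1 : IntervalIntegrable (Fpw l a α β) volume 0 s1 :=
    (continuousOn_const.congr hEq1).intervalIntegrable
  have hint2 : IntervalIntegrable (Fpw l a α β) volume s1 s2 :=
    (hcont2.congr hEq2).intervalIntegrable
  have hint3 : IntervalIntegrable (Fpw l a α β) volume s2 T :=
    (hcont3.congr hEq3).intervalIntegrable
  have hI1 : ∫ r in (0:ℝ)..s1, Fpw l a α β r = s1 := by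
    rw [intervalIntegral.integral_congr hEq1, intervalIntegral.integral_const]
    simp
  have hI2 : ∫ r in s1..s2, Fpw l a α β r
      = C2 * (s2 - s1) + ((1-l)/β) * Real.log (s2/s1) := by
    rw [intervalIntegral.integral_congr hEq2]
    exact int_aff_inv _ _ _ _ hs1 h12.le
  have hI3 : ∫ r in s2..T, Fpw l a α β r
      = C3 * (T - s2) + (l/α) * Real.log (T/s2) := by
    rw [intervalIntegral.integral_congr hEq3]
    exact int_aff_inv _ _ _ _ hs2 h2T.le
  have hsplit : ∫ r in (0:ℝ)..T, Fpw l a α β r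
      = (∫ r in (0:ℝ)..s1, Fpw l a α β r) + (∫ r in s1..s2, Fpw l a α β r)
        + (∫ r in s2..T, Fpw l a α β r) := by
    rw [intervalIntegral.integral_add_adjacent_intervals hint1 hint2,
      intervalIntegral.integral_add_adjacent_intervals (hint1.trans hint2) hint3]
  have hEqT : EqOn (Fpw l a α β) 0 (Ioi T) := by
    intro r hr
    simp only [mem_Ioi] at hr
    simp only [Fpw, Pi.zero_apply]
    rw [if_neg (by linarith), if_neg (by linarith), if_neg (by linarith)]
  have hIntOc : IntegrableOn (Fpw l a α β) (Ioc 0 T) volume :=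
    (intervalIntegrable_iff_integrableOn_Ioc_of_le hT.le).mp
      ((hint1.trans hint2).trans hint3)
  have hIntOi : IntegrableOn (Fpw l a α β) (Ioi T) volume :=
    (integrableOn_congr_fun hEqT measurableSet_Ioi).mpr (integrableOn_zero)
  have hunion : ∫ r in Ioi (0:ℝ), Fpw l a α β r
      = (∫ r in Ioc (0:ℝ) T, Fpw l a α β r) + ∫ r in Ioi T, Fpw l a α β r := by
    rw [← setIntegral_union (Ioc_disjoint_Ioi le_rfl) measurableSet_Ioi hIntOc hIntOi,
      Ioc_union_Ioi_eq_Ioi hT.le]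
  have hzero : ∫ r in Ioi T, Fpw l a α β r = 0 := by
    rw [setIntegral_congr_fun measurableSet_Ioi hEqT]
    simp
  have hIocT : ∫ r in Ioc (0:ℝ) T, Fpw l a α β r = ∫ r in (0:ℝ)..T, Fpw l a α β r :=
    (intervalIntegral.integral_of_le hT.le).symm
  have hlog1 : Real.log (s2/s1) = Real.log ((a+β)/a) := by
    congr 1
    rw [hs1def, hs2def]
    field_simp
  have hlog2 : Real.log (T/s2) = Real.log (a/(a-α)) := by
    congr 1
    rw [hTdef, hs2def]
    field_simp
  have hconst : s1 + C2 * (s2 - s1) + C3 * (T - s2) = 0 := by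
    rw [hs1def, hs2def, hTdef, hC2, hC3]
    field_simp
    ring
  rw [hunion, hzero, hIocT, hsplit, hI1, hI2, hI3, hlog1, hlog2]
  linear_combination hconst

end Aux

theorem stmt_12 (n : ℕ) (hn : 1 ≤ n) (l : ℝ) (hl : l ∈ Set.Icc (0:ℝ) 1)
    (d c hh a α β e xs : Fin n → ℝ)
    (hd : ∀ i, 0 ≤ d i) (hhpos : ∀ i, 0 < hh i)
    (hα : ∀ i, 0 < α i) (hβ : ∀ i, 0 < β i)
    (hpos : ∀ i, 0 < a i - α i)
    (he : ∀ i, e i =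
      ∫ r in Set.Ioi (0:ℝ), mMeas l (triMF2 (a i) (α i) (β i)) (Set.Iic (1 / r)))
    (hxs : ∀ i, xs i = d i / (hh i *
      (l / α i * Real.log (a i / (a i - α i)) +
        (1 - l) / β i * Real.log ((a i + β i) / a i)))) :
    ∀ y : Fin n → ℝ, (∀ i, 0 ≤ y i) →
      (∑ i, (d i * y i - c i - hh i * y i ^ 2 / 2 * e i)) ≤
      (∑ i, (d i * xs i - c i - hh i * xs i ^ 2 / 2 * e i)) := by
  intro y hy
  apply Finset.sum_le_sum
  intro i _
  have ha0 : 0 < a i := by linarith [hpos i, hα i]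
  set k := l / α i * Real.log (a i / (a i - α i)) +
      (1 - l) / β i * Real.log ((a i + β i) / a i) with hk
  have hei : e i = k := by
    rw [he i, setIntegral_congr_fun measurableSet_Ioi
      (mMeas_eq_Fpw l (hα i) (hβ i) (hpos i)),
      integral_Fpw l (hα i) (hβ i) (hpos i)]
  have hL1 : 0 < Real.log (a i / (a i - α i)) :=
    Real.log_pos ((one_lt_div (hpos i)).mpr (by linarith [hα i]))
  have hL2 : 0 < Real.log ((a i + β i) / a i) :=
    Real.log_pos ((one_lt_div ha0).mpr (by linarith [hβ i]))
  have hkpos : 0 < k := by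
    rw [hk]
    rcases eq_or_lt_of_le hl.1 with h | h
    · rw [← h]
      simp only [zero_div, zero_mul, zero_add]
      exact mul_pos (div_pos (by norm_num) (hβ i)) hL2
    · have h1 : 0 < l / α i * Real.log (a i / (a i - α i)) :=
        mul_pos (div_pos h (hα i)) hL1
      have h2 : 0 ≤ (1 - l) / β i * Real.log ((a i + β i) / a i) :=
        mul_nonneg (div_nonneg (by linarith [hl.2]) (hβ i).le) hL2.le
      linarith
  have hne : hh i * k ≠ 0 := (mul_pos (hhpos i) hkpos).ne'
  have hXd : hh i * k * xs i = d i := by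
    rw [hxs i, ← hk, mul_comm, div_mul_cancel₀ _ hne]
  rw [hei]
  have expand : (d i * xs i - c i - hh i * xs i ^ 2 / 2 * k)
      - (d i * y i - c i - hh i * y i ^ 2 / 2 * k)
      = hh i * k * (xs i - y i) ^ 2 / 2 := by
    linear_combination (y i - xs i) * hXd
  have sq : 0 ≤ hh i * k * (xs i - y i) ^ 2 / 2 :=
    div_nonneg (mul_nonneg (mul_pos (hhpos i) hkpos).le (sq_nonneg _)) (by norm_num)
  linarith [expand, sq]
end

section
/- Let D be the trapezoidal fuzzy variable (r1,r2,r3,r4) with 0 < r1 < r2 ≤ r3 < r4, and let λ1, λ2 ∈ [0,1] with λ1 ≤ λ2. Then E_{λ1}(1/D) ≤ E_{λ2}(1/D), i.e., (λ1/(r2 − r1))·ln(r2/r1) + ((1 − λ1)/(r4 − r3))·ln(r4/r3) ≤ (λ2/(r2 − r1))·ln(r2/r1) + ((1 − λ2)/(r4 − r3))·ln(r4/r3); equivalently, (1/(r2 − r1))·ln(r2/r1) ≥ (1/(r4 − r3))·ln(r4/r3). -/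
open MeasureTheory Set

/-!
Because μ attains the value 1, the necessity of an event never exceeds its possibility, so
`m_λ = Nec + λ (Pos − Nec)` is pointwise nondecreasing in `λ`. The integrands are bounded, and they
vanish for `r > 1/r1` (the event `D ≤ 1/r` then has possibility 0 and necessity 0), hence they
are integrable and their integrals are ordered as well. For the closed form, `ln(b/a)/(b − a)` is
the mean of `1/x` over `[a, b]` and so lies between `1/b` and `1/a`; the `(r3, r4)` term is thus at
most `1/r3 ≤ 1/r2`, which is at most the `(r1, r2)` term.
-/

namespace Real

lemma one_div_sub_mul_log_div_mem_Icc {a b : ℝ} (ha : 0 < a) (hab : a < b) :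
    1 / (b - a) * log (b / a) ∈ Icc b⁻¹ a⁻¹ := by
  have hb : 0 < b := ha.trans hab
  have hba : 0 < b - a := sub_pos.2 hab
  have hlower : 1 - (b / a)⁻¹ ≤ log (b / a) := one_sub_inv_le_log_of_pos (by positivity)
  have hupper : log (b / a) ≤ b / a - 1 := log_le_sub_one_of_pos (by positivity)
  constructor
  · calc b⁻¹ = 1 / (b - a) * (1 - (b / a)⁻¹) := by field_simp
      _ ≤ 1 / (b - a) * log (b / a) := by gcongr
  · calc 1 / (b - a) * log (b / a) ≤ 1 / (b - a) * (b / a - 1) := by gcongr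
      _ = a⁻¹ := by field_simp

end Real

section FuzzyMeasures

variable {μ : ℝ → ℝ}

lemma Pos_nonneg (hμ : ∀ x, μ x ∈ Icc (0 : ℝ) 1) (A : Set ℝ) : 0 ≤ Pos μ A :=
  Real.sSup_nonneg (by rintro _ ⟨x, -, rfl⟩; exact (hμ x).1)

lemma Pos_le_one (hμ : ∀ x, μ x ∈ Icc (0 : ℝ) 1) (A : Set ℝ) : Pos μ A ≤ 1 :=
  Real.sSup_le (by rintro _ ⟨x, -, rfl⟩; exact (hμ x).2) zero_le_one

lemma le_Pos (hμ : ∀ x, μ x ∈ Icc (0 : ℝ) 1) {A : Set ℝ} {x : ℝ} (hx : x ∈ A) :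
    μ x ≤ Pos μ A :=
  le_csSup ⟨1, by rintro _ ⟨y, -, rfl⟩; exact (hμ y).2⟩ ⟨x, hx, rfl⟩

lemma Pos_mono (hμ : ∀ x, μ x ∈ Icc (0 : ℝ) 1) {A B : Set ℝ} (hAB : A ⊆ B) :
    Pos μ A ≤ Pos μ B :=
  Real.sSup_le (by rintro _ ⟨x, hx, rfl⟩; exact le_Pos hμ (hAB hx)) (Pos_nonneg hμ B)

lemma Pos_eq_one (hμ : ∀ x, μ x ∈ Icc (0 : ℝ) 1) {A : Set ℝ} {x : ℝ} (hx1 : μ x = 1)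
    (hx : x ∈ A) : Pos μ A = 1 :=
  (Pos_le_one hμ A).antisymm (hx1 ▸ le_Pos hμ hx)

lemma Nec_le_Pos (hμ : ∀ x, μ x ∈ Icc (0 : ℝ) 1) {x₀ : ℝ} (hx₀ : μ x₀ = 1) (A : Set ℝ) :
    Nec μ A ≤ Pos μ A := by
  unfold Nec
  by_cases hA : x₀ ∈ A
  · linarith [Pos_eq_one hμ hx₀ hA, Pos_nonneg hμ Aᶜ]
  · linarith [Pos_eq_one hμ hx₀ (mem_compl hA), Pos_nonneg hμ A]

lemma mMeas_mono_left (hμ : ∀ x, μ x ∈ Icc (0 : ℝ) 1) {x₀ : ℝ} (hx₀ : μ x₀ = 1)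
    (A : Set ℝ) {l₁ l₂ : ℝ} (hl : l₁ ≤ l₂) : mMeas l₁ μ A ≤ mMeas l₂ μ A := by
  have := mul_le_mul_of_nonneg_right hl (sub_nonneg.2 (Nec_le_Pos hμ hx₀ A))
  unfold mMeas
  linarith

lemma monotone_Pos_Iic (hμ : ∀ x, μ x ∈ Icc (0 : ℝ) 1) : Monotone fun t => Pos μ (Iic t) :=
  fun _ _ hst => Pos_mono hμ (Iic_subset_Iic.2 hst)

lemma monotone_Nec_Iic (hμ : ∀ x, μ x ∈ Icc (0 : ℝ) 1) : Monotone fun t => Nec μ (Iic t) :=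
  fun _ _ hst => sub_le_sub_left (Pos_mono hμ (compl_subset_compl.2 (Iic_subset_Iic.2 hst))) 1

lemma Pos_Iic_eq_zero (hμ : ∀ x, μ x ∈ Icc (0 : ℝ) 1) {a t : ℝ} (hzero : ∀ x < a, μ x = 0)
    (ht : t < a) : Pos μ (Iic t) = 0 :=
  (Real.sSup_le (by rintro _ ⟨x, hx, rfl⟩; exact (hzero x (lt_of_le_of_lt hx ht)).le)
    le_rfl).antisymm (Pos_nonneg hμ _)

lemma Nec_Iic_eq_zero (hμ : ∀ x, μ x ∈ Icc (0 : ℝ) 1) {x₀ t : ℝ} (hx₀ : μ x₀ = 1)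
    (ht : t < x₀) : Nec μ (Iic t) = 0 := by
  rw [Nec, Pos_eq_one hμ hx₀ (by simpa using ht), sub_self]

end FuzzyMeasures

lemma Monotone.integrableOn_comp_one_div {g : ℝ → ℝ} (hg : Monotone g) {a C : ℝ} (ha : 0 < a)
    (hzero : ∀ t < a, g t = 0) (hC : ∀ t, g t ≤ C) :
    IntegrableOn (fun r => g (1 / r)) (Ioi 0) := by
  have hmeas : Measurable fun r : ℝ => g (1 / r) := hg.measurable.comp (by fun_prop)
  have hnonneg (t : ℝ) : 0 ≤ g t :=
    (hzero _ ((min_le_right t 0).trans_lt ha)).symm.le.trans (hg (min_le_left t 0))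
  have hnear : IntegrableOn (fun r => g (1 / r)) (Ioc 0 (1 / a)) :=
    Measure.integrableOn_of_bounded measure_Ioc_lt_top.ne hmeas.aestronglyMeasurable (M := C)
      (ae_of_all _ fun r => by rw [Real.norm_of_nonneg (hnonneg _)]; exact hC _)
  have hfar : IntegrableOn (fun r => g (1 / r)) (Ioi (1 / a)) :=
    integrableOn_zero.congr_fun (fun r (hr : 1 / a < r) =>
      (hzero _ ((one_div_lt ha ((one_div_pos.2 ha).trans hr)).1 hr)).symm) measurableSet_Ioi
  rw [← Ioc_union_Ioi_eq_Ioi (one_div_pos.2 ha).le]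
  exact hnear.union hfar

lemma integrableOn_mMeas_Iic_one_div {μ : ℝ → ℝ} (hμ : ∀ x, μ x ∈ Icc (0 : ℝ) 1) {x₀ a : ℝ}
    (hx₀ : μ x₀ = 1) (ha : 0 < a) (hzero : ∀ x < a, μ x = 0) (l : ℝ) :
    IntegrableOn (fun r => mMeas l μ (Iic (1 / r))) (Ioi 0) := by
  have hax₀ : a ≤ x₀ := not_lt.1 fun h => by simp [hzero x₀ h] at hx₀
  have hPos := (monotone_Pos_Iic hμ).integrableOn_comp_one_div ha
    (fun t ht => Pos_Iic_eq_zero hμ hzero ht) (fun t => Pos_le_one hμ _)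
  have hNec := (monotone_Nec_Iic hμ).integrableOn_comp_one_div ha
    (fun t ht => Nec_Iic_eq_zero hμ hx₀ (ht.trans_le hax₀))
    (fun t => sub_le_self 1 (Pos_nonneg hμ _))
  exact (hPos.const_mul l).add (hNec.const_mul (1 - l))

section Trapezoid

variable {r1 r2 r3 r4 : ℝ}

lemma trapMF_mem_Icc (h12 : r1 < r2) (h34 : r3 < r4) (x : ℝ) :
    trapMF r1 r2 r3 r4 x ∈ Icc (0 : ℝ) 1 := by
  unfold trapMF
  split_ifs with h h' h''
  · exact ⟨div_nonneg (by linarith) (by linarith), (div_le_one (by linarith)).2 (by linarith)⟩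
  · exact ⟨zero_le_one, le_rfl⟩
  · exact ⟨div_nonneg (by linarith) (by linarith), (div_le_one (by linarith)).2 (by linarith)⟩
  · exact ⟨le_rfl, zero_le_one⟩

lemma trapMF_right_apply (h12 : r1 < r2) : trapMF r1 r2 r3 r4 r2 = 1 := by
  rw [trapMF, if_pos ⟨h12.le, le_rfl⟩, div_self (sub_ne_zero.2 h12.ne')]

lemma trapMF_eq_zero_of_lt (h12 : r1 < r2) (h23 : r2 ≤ r3) {x : ℝ} (hx : x < r1) :
    trapMF r1 r2 r3 r4 x = 0 := by
  rw [trapMF, if_neg (by intro h; linarith [h.1]), if_neg (by intro h; linarith [h.1]),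
    if_neg (by intro h; linarith [h.1])]

end Trapezoid

theorem stmt_15_general (r1 r2 r3 r4 l1 l2 : ℝ)
    (h0 : 0 < r1) (h12 : r1 < r2) (h23 : r2 ≤ r3) (h34 : r3 < r4)
    (hle : l1 ≤ l2) :
    (∫ r in Set.Ioi (0:ℝ), mMeas l1 (trapMF r1 r2 r3 r4) (Set.Iic (1 / r))) ≤
      (∫ r in Set.Ioi (0:ℝ), mMeas l2 (trapMF r1 r2 r3 r4) (Set.Iic (1 / r))) ∧
    l1 / (r2 - r1) * Real.log (r2 / r1) + (1 - l1) / (r4 - r3) * Real.log (r4 / r3) ≤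
      l2 / (r2 - r1) * Real.log (r2 / r1) + (1 - l2) / (r4 - r3) * Real.log (r4 / r3) ∧
    1 / (r4 - r3) * Real.log (r4 / r3) ≤ 1 / (r2 - r1) * Real.log (r2 / r1) := by
  have hμ := trapMF_mem_Icc (r3 := r3) h12 h34
  have hnormal : trapMF r1 r2 r3 r4 r2 = 1 := trapMF_right_apply h12
  have hint (l : ℝ) := integrableOn_mMeas_Iic_one_div hμ hnormal h0
    (fun _ => trapMF_eq_zero_of_lt h12 h23) l
  have hmean : 1 / (r4 - r3) * Real.log (r4 / r3) ≤ 1 / (r2 - r1) * Real.log (r2 / r1) :=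
    calc 1 / (r4 - r3) * Real.log (r4 / r3) ≤ r3⁻¹ :=
          (Real.one_div_sub_mul_log_div_mem_Icc (h0.trans_le (h12.le.trans h23)) h34).2
      _ ≤ r2⁻¹ := inv_anti₀ (h0.trans h12) h23
      _ ≤ 1 / (r2 - r1) * Real.log (r2 / r1) :=
          (Real.one_div_sub_mul_log_div_mem_Icc h0 h12).1
  refine ⟨?_, ?_, hmean⟩
  · exact setIntegral_mono_on (hint l1) (hint l2) measurableSet_Ioi
      fun r _ => mMeas_mono_left hμ hnormal _ hle
  · linear_combination (l2 - l1) * hmean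

theorem stmt_15 (r1 r2 r3 r4 l1 l2 : ℝ)
    (h0 : 0 < r1) (h12 : r1 < r2) (h23 : r2 ≤ r3) (h34 : r3 < r4)
    (hl1 : l1 ∈ Set.Icc (0:ℝ) 1) (hl2 : l2 ∈ Set.Icc (0:ℝ) 1) (hle : l1 ≤ l2) :
    (∫ r in Set.Ioi (0:ℝ), mMeas l1 (trapMF r1 r2 r3 r4) (Set.Iic (1 / r))) ≤
      (∫ r in Set.Ioi (0:ℝ), mMeas l2 (trapMF r1 r2 r3 r4) (Set.Iic (1 / r))) ∧
    l1 / (r2 - r1) * Real.log (r2 / r1) + (1 - l1) / (r4 - r3) * Real.log (r4 / r3) ≤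
      l2 / (r2 - r1) * Real.log (r2 / r1) + (1 - l2) / (r4 - r3) * Real.log (r4 / r3) ∧
    1 / (r4 - r3) * Real.log (r4 / r3) ≤ 1 / (r2 - r1) * Real.log (r2 / r1) :=
  stmt_15_general r1 r2 r3 r4 l1 l2 h0 h12 h23 h34 hle
end

section
/- Let n ≥ 1 and for each i = 1, …, n let d_i ≥ 0, h_i > 0, α_i > 0, β_i > 0, 0 < a_i − α_i, and a_i ≤ b_i. For λ ∈ [0,1] define x_i*(λ) = d_i / ( h_i·[ (λ/α_i)·ln(a_i/(a_i − α_i)) + ((1 − λ)/β_i)·ln((b_i + β_i)/b_i) ] ). If λ1, λ2 ∈ [0,1] with λ1 ≤ λ2, then x_i*(λ1) ≥ x_i*(λ2) for every i = 1, …, n. -/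
open MeasureTheory Set

/-!
`E_λ(1/D)` is affine in `λ` with slope `log (a / (a - α)) / α - log ((b + β) / b) / β`. By
`log x ≤ x - 1`, applied to `(a - α) / a` and to `(b + β) / b`, the first term is at least `1 / a`
and the second at most `1 / b`, so the slope is at least `1 / a - 1 / b ≥ 0`. Hence `E_λ(1/D)` is
positive and nondecreasing for `λ ≥ 0`, and `x*(λ) = d / (h · E_λ(1/D))` is nonincreasing.
-/

open Real

namespace TrapezoidalDemand

/-- The closed form of `E_λ(1/D)` for the trapezoidal demand `D = (a - α, a, b, b + β)`. -/
noncomputable def expectedReciprocal (a b α β l : ℝ) : ℝ :=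
  l / α * log (a / (a - α)) + (1 - l) / β * log ((b + β) / b)

lemma inv_le_log_div_sub_div {a α : ℝ} (hα : 0 < α) (hpos : 0 < a - α) :
    1 / a ≤ log (a / (a - α)) / α := by
  have ha : 0 < a := by linarith
  have h := one_sub_inv_le_log_of_pos (div_pos ha hpos)
  rw [le_div_iff₀ hα]
  calc 1 / a * α = 1 - (a / (a - α))⁻¹ := by field_simp; ring
    _ ≤ log (a / (a - α)) := h

lemma log_add_div_div_le_inv {b β : ℝ} (hb : 0 < b) (hβ : 0 < β) :
    log ((b + β) / b) / β ≤ 1 / b := by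
  have h := log_le_sub_one_of_pos (div_pos (add_pos hb hβ) hb)
  rw [div_le_iff₀ hβ]
  calc log ((b + β) / b) ≤ (b + β) / b - 1 := h
    _ = 1 / b * β := by field_simp; ring

lemma log_add_div_div_pos {b β : ℝ} (hb : 0 < b) (hβ : 0 < β) :
    0 < log ((b + β) / b) / β :=
  div_pos (log_pos ((one_lt_div hb).2 (lt_add_of_pos_right b hβ))) hβ

section

variable {a b α β : ℝ}

lemma expectedReciprocal_eq (l : ℝ) :
    expectedReciprocal a b α β l = log ((b + β) / b) / β +
      l * (log (a / (a - α)) / α - log ((b + β) / b) / β) := by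
  unfold expectedReciprocal
  ring

lemma log_add_div_div_le_log_div_sub_div (hα : 0 < α) (hβ : 0 < β) (hpos : 0 < a - α)
    (hab : a ≤ b) :
    log ((b + β) / b) / β ≤ log (a / (a - α)) / α :=
  calc log ((b + β) / b) / β ≤ 1 / b := log_add_div_div_le_inv (by linarith) hβ
    _ ≤ 1 / a := one_div_le_one_div_of_le (by linarith) hab
    _ ≤ log (a / (a - α)) / α := inv_le_log_div_sub_div hα hpos

lemma monotone_expectedReciprocal (hα : 0 < α) (hβ : 0 < β) (hpos : 0 < a - α)
    (hab : a ≤ b) : Monotone (expectedReciprocal a b α β) := by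
  intro l₁ l₂ hl
  have hslope := sub_nonneg.2 (log_add_div_div_le_log_div_sub_div hα hβ hpos hab)
  rw [expectedReciprocal_eq, expectedReciprocal_eq]
  gcongr

lemma expectedReciprocal_pos (hα : 0 < α) (hβ : 0 < β) (hpos : 0 < a - α) (hab : a ≤ b)
    {l : ℝ} (hl : 0 ≤ l) : 0 < expectedReciprocal a b α β l :=
  calc 0 < log ((b + β) / b) / β := log_add_div_div_pos (by linarith) hβ
    _ = expectedReciprocal a b α β 0 := by rw [expectedReciprocal_eq]; ring
    _ ≤ expectedReciprocal a b α β l := monotone_expectedReciprocal hα hβ hpos hab hl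

end

end TrapezoidalDemand

open TrapezoidalDemand in
theorem stmt_16_general (n : ℕ) (d hh a b α β : Fin n → ℝ)
    (hd : ∀ i, 0 ≤ d i) (hhpos : ∀ i, 0 < hh i)
    (hα : ∀ i, 0 < α i) (hβ : ∀ i, 0 < β i)
    (hpos : ∀ i, 0 < a i - α i) (hab : ∀ i, a i ≤ b i)
    (l1 l2 : ℝ) (hl1 : l1 ∈ Set.Icc (0:ℝ) 1)
    (hle : l1 ≤ l2) :
    ∀ i,
      d i / (hh i * (l2 / α i * Real.log (a i / (a i - α i)) +
        (1 - l2) / β i * Real.log ((b i + β i) / b i))) ≤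
      d i / (hh i * (l1 / α i * Real.log (a i / (a i - α i)) +
        (1 - l1) / β i * Real.log ((b i + β i) / b i))) := by
  intro i
  have hE₁ := expectedReciprocal_pos (hα i) (hβ i) (hpos i) (hab i) hl1.1
  have hE := monotone_expectedReciprocal (hα i) (hβ i) (hpos i) (hab i) hle
  exact div_le_div_of_nonneg_left (hd i) (mul_pos (hhpos i) hE₁)
    (mul_le_mul_of_nonneg_left hE (hhpos i).le)

theorem stmt_16 (n : ℕ) (hn : 1 ≤ n) (d hh a b α β : Fin n → ℝ)
    (hd : ∀ i, 0 ≤ d i) (hhpos : ∀ i, 0 < hh i)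
    (hα : ∀ i, 0 < α i) (hβ : ∀ i, 0 < β i)
    (hpos : ∀ i, 0 < a i - α i) (hab : ∀ i, a i ≤ b i)
    (l1 l2 : ℝ) (hl1 : l1 ∈ Set.Icc (0:ℝ) 1) (hl2 : l2 ∈ Set.Icc (0:ℝ) 1)
    (hle : l1 ≤ l2) :
    ∀ i,
      d i / (hh i * (l2 / α i * Real.log (a i / (a i - α i)) +
        (1 - l2) / β i * Real.log ((b i + β i) / b i))) ≤
      d i / (hh i * (l1 / α i * Real.log (a i / (a i - α i)) +
        (1 - l1) / β i * Real.log ((b i + β i) / b i))) :=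
  stmt_16_general n d hh a b α β hd hhpos hα hβ hpos hab l1 l2 hl1 hle
end

section
/- Let μ : ℝ → ℝ be a membership function with 0 ≤ μ(x) ≤ 1 for all x and sup_{x∈ℝ} μ(x) = 1, and let λ1, λ2 ∈ [0,1] with λ1 ≤ λ2. Assume that for λ ∈ {λ1, λ2} the function r ↦ m_λ([r,∞)) is integrable on (0,∞) and the function r ↦ m_λ([r,∞)) − 1 is integrable on (−∞,0). Then E_{λ1}(ξ) ≤ E_{λ2}(ξ). -/
open MeasureTheory Set

lemma pos_add_pos_compl (μ : ℝ → ℝ) (hμ0 : ∀ x, 0 ≤ μ x) (hμ1 : ∀ x, μ x ≤ 1)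
    (hsup : sSup (Set.range μ) = 1) (A : Set ℝ) (hA : A.Nonempty) (hA' : Aᶜ.Nonempty) :
    1 ≤ Pos μ A + Pos μ Aᶜ := by
  have hbdd : ∀ B : Set ℝ, BddAbove (μ '' B) := by
    intro B
    exact ⟨1, fun y hy => by obtain ⟨x, _, rfl⟩ := hy; exact hμ1 x⟩
  have h1 : Set.range μ = μ '' A ∪ μ '' Aᶜ := by
    rw [← Set.image_union, Set.union_compl_self, Set.image_univ]
  have h2 : sSup (Set.range μ) = max (Pos μ A) (Pos μ Aᶜ) := by
    rw [h1]
    exact csSup_union (hbdd A) (hA.image μ) (hbdd Aᶜ) (hA'.image μ)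
  have hposA : 0 ≤ Pos μ A := by
    obtain ⟨x, hx⟩ := hA
    exact le_trans (hμ0 x) (le_csSup (hbdd A) ⟨x, hx, rfl⟩)
  have hposA' : 0 ≤ Pos μ Aᶜ := by
    obtain ⟨x, hx⟩ := hA'
    exact le_trans (hμ0 x) (le_csSup (hbdd Aᶜ) ⟨x, hx, rfl⟩)
  have := hsup ▸ h2
  rcases max_cases (Pos μ A) (Pos μ Aᶜ) with ⟨h, _⟩ | ⟨h, _⟩ <;> rw [h] at this <;> linarith

lemma mMeas_mono (μ : ℝ → ℝ) (l1 l2 : ℝ)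
    (hμ0 : ∀ x, 0 ≤ μ x) (hμ1 : ∀ x, μ x ≤ 1)
    (hsup : sSup (Set.range μ) = 1) (hle : l1 ≤ l2) (r : ℝ) :
    mMeas l1 μ (Set.Ici r) ≤ mMeas l2 μ (Set.Ici r) := by
  have key := pos_add_pos_compl μ hμ0 hμ1 hsup (Set.Ici r) ⟨r, le_refl r⟩
    ⟨r - 1, by simp⟩
  simp only [mMeas, Nec]
  nlinarith [key]

theorem stmt_18 (μ : ℝ → ℝ) (l1 l2 : ℝ)
    (hμ0 : ∀ x, 0 ≤ μ x) (hμ1 : ∀ x, μ x ≤ 1)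
    (hsup : sSup (Set.range μ) = 1)
    (hl1 : l1 ∈ Set.Icc (0:ℝ) 1) (hl2 : l2 ∈ Set.Icc (0:ℝ) 1) (hle : l1 ≤ l2)
    (hint1 : MeasureTheory.IntegrableOn (fun r => mMeas l1 μ (Set.Ici r)) (Set.Ioi 0))
    (hint2 : MeasureTheory.IntegrableOn (fun r => mMeas l2 μ (Set.Ici r)) (Set.Ioi 0))
    (hint1' : MeasureTheory.IntegrableOn (fun r => mMeas l1 μ (Set.Ici r) - 1) (Set.Iio 0))
    (hint2' : MeasureTheory.IntegrableOn (fun r => mMeas l2 μ (Set.Ici r) - 1) (Set.Iio 0)) :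
    Eexp l1 μ ≤ Eexp l2 μ := by
  have hmono := mMeas_mono μ l1 l2 hμ0 hμ1 hsup hle
  unfold Eexp
  gcongr ?_ + ?_
  case h₁ =>
    rw [MeasureTheory.integral_Iic_eq_integral_Iio, MeasureTheory.integral_Iic_eq_integral_Iio]
    apply MeasureTheory.setIntegral_mono_on hint1' hint2' measurableSet_Iio
    intro x _
    linarith [hmono x]
  case h₂ =>
    apply MeasureTheory.setIntegral_mono_on hint1 hint2 measurableSet_Ioi
    intro x _
    exact hmono x
end

section
/- Let μ : ℝ → ℝ be a membership function with 0 ≤ μ(x) ≤ 1 for all x, let λ ∈ [0,1], and let α > 0. Define ν : ℝ → ℝ by ν(x) = μ(x/α), the membership function of the scaled fuzzy variable αξ. Then for every r ∈ ℝ, m_λ^ν([r,∞)) = m_λ^μ([r/α,∞)); and if r ↦ m_λ^μ([r,∞)) is integrable on (0,∞) and r ↦ m_λ^μ([r,∞)) − 1 is integrable on (−∞,0), then E_λ(αξ) = α·E_λ(ξ), where E_λ(αξ) is the m_λ-expected value computed from ν. -/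
open MeasureTheory Set Pointwise

theorem stmt_19 (μ : ℝ → ℝ) (l α : ℝ)
    (hμ0 : ∀ x, 0 ≤ μ x) (hμ1 : ∀ x, μ x ≤ 1)
    (hl : l ∈ Set.Icc (0:ℝ) 1) (hα : 0 < α) :
    (∀ r : ℝ, mMeas l (fun x => μ (x / α)) (Set.Ici r) = mMeas l μ (Set.Ici (r / α))) ∧
    (MeasureTheory.IntegrableOn (fun r => mMeas l μ (Set.Ici r)) (Set.Ioi 0) →
     MeasureTheory.IntegrableOn (fun r => mMeas l μ (Set.Ici r) - 1) (Set.Iio 0) →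
     Eexp l (fun x => μ (x / α)) = α * Eexp l μ) := by
  have hα' : (0:ℝ) < α⁻¹ := inv_pos.2 hα
  have hdiv : (fun x : ℝ => x / α) = (fun x : ℝ => α⁻¹ • x) := by
    ext x; simp [div_eq_inv_mul, mul_comm]
  have himgIci : ∀ r : ℝ, (fun x : ℝ => x / α) '' Set.Ici r = Set.Ici (r / α) := by
    intro r
    rw [hdiv, Set.image_smul, LinearOrderedField.smul_Ici hα']
    simp [smul_eq_mul, div_eq_inv_mul, mul_comm]
  have himgIio : ∀ r : ℝ, (fun x : ℝ => x / α) '' Set.Iio r = Set.Iio (r / α) := by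
    intro r
    rw [hdiv, Set.image_smul, LinearOrderedField.smul_Iio hα']
    simp [smul_eq_mul, div_eq_inv_mul, mul_comm]
  have hmain : ∀ r : ℝ,
      mMeas l (fun x => μ (x / α)) (Set.Ici r) = mMeas l μ (Set.Ici (r / α)) := by
    intro r
    have h1 : (fun x => μ (x / α)) '' Set.Ici r = μ '' Set.Ici (r / α) := by
      rw [show (fun x => μ (x / α)) = μ ∘ (fun x : ℝ => x / α) from rfl,
        Set.image_comp, himgIci]
    have h2 : (fun x => μ (x / α)) '' (Set.Ici r)ᶜ = μ '' (Set.Ici (r / α))ᶜ := by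
      rw [Set.compl_Ici, Set.compl_Ici,
        show (fun x => μ (x / α)) = μ ∘ (fun x : ℝ => x / α) from rfl,
        Set.image_comp, himgIio]
    simp only [mMeas, Pos, Nec, h1, h2]
  refine ⟨hmain, fun _ _ => ?_⟩
  have hIic : α⁻¹ • Set.Iic (0:ℝ) = Set.Iic 0 := by
    rw [LinearOrderedField.smul_Iic hα']; simp
  have hIoi : α⁻¹ • Set.Ioi (0:ℝ) = Set.Ioi 0 := by
    rw [LinearOrderedField.smul_Ioi hα']; simp
  have key : ∀ g : ℝ → ℝ, ∀ s : Set ℝ, α⁻¹ • s = s →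
      (∫ r in s, g (r / α)) = α * ∫ r in s, g r := by
    intro g s hs
    have := MeasureTheory.Measure.setIntegral_comp_smul_of_pos
      (volume : Measure ℝ) g s hα'
    rw [hs] at this
    simp only [Module.finrank_self, pow_one, inv_inv, smul_eq_mul] at this
    calc (∫ r in s, g (r / α)) = ∫ r in s, g (α⁻¹ • r) := by
          simp [div_eq_inv_mul, smul_eq_mul, mul_comm]
      _ = α * ∫ r in s, g r := this
  have e1 : (∫ r in Set.Iic (0:ℝ), (mMeas l (fun x => μ (x / α)) (Set.Ici r) - 1))
      = α * ∫ r in Set.Iic (0:ℝ), (mMeas l μ (Set.Ici r) - 1) := by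
    have := key (fun r => mMeas l μ (Set.Ici r) - 1) (Set.Iic 0) hIic
    simpa only [hmain] using this
  have e2 : (∫ r in Set.Ioi (0:ℝ), mMeas l (fun x => μ (x / α)) (Set.Ici r))
      = α * ∫ r in Set.Ioi (0:ℝ), mMeas l μ (Set.Ici r) := by
    have := key (fun r => mMeas l μ (Set.Ici r)) (Set.Ioi 0) hIoi
    simpa only [hmain] using this
  simp only [Eexp, e1, e2, mul_add]
end
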